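/- arXiv:2011.01050 — 2 statements merged into one kernel-verified Lean document; each statement's English description precedes it below -/
import Mathlib

section
/- Let k be a finite field of cardinality q^n and let f ∈ k[X] be a polynomial with deg f ≥ 1. Then deg(f̄) ≤ w(f) ≤ (q−1)(⌊log_q(deg f)⌋ + 1). -/
open MvPolynomial

/-- The reduced exponent `e'` determined by `X^{e'} = X^e mod (X^{q^n} - X)`:
`e' = e` if `e < q^n`, and otherwise `e'` is the representative of `e` modulo `q^n - 1`
lying in `{1, …, q^n - 1}`. -/
def reduceExp (q n e : ℕ) : ℕ :=
  if e < q ^ n then e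
  else if (q ^ n - 1) ∣ e then q ^ n - 1 else e % (q ^ n - 1)

/-- The exponent vector of `overline{X^e}`: the base-`q` digits of the reduced exponent. -/
noncomputable def expVec (q n e : ℕ) : Fin n →₀ ℕ :=
  Finsupp.equivFunOnFinite.symm fun j : Fin n => reduceExp q n e / q ^ (j : ℕ) % q

/-- The fake Weil descent map `f ↦ f̄` from `k[X]` to `k[X_0, …, X_{n-1}]`, the `k`-linear
extension of `X^e ↦ overline{X^e} = X_0^{e'_0} ⋯ X_{n-1}^{e'_{n-1}}`. -/
noncomputable def fakeWeil {k : Type*} [Field k] (q n : ℕ) (f : Polynomial k) :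
    MvPolynomial (Fin n) k :=
  f.sum fun e c => MvPolynomial.monomial (expVec q n e) c

/-- The fake Weil descent system `F̄_f` of a finite set `F ⊆ k[X]`:
`{f̄ : f ∈ F} ∪ {X_0^q - X_1, …, X_{n-2}^q - X_{n-1}, X_{n-1}^q - X_0}`. -/
noncomputable def fakeWeilSystem {k : Type*} [Field k] [DecidableEq k] (q n : ℕ) [NeZero n]
    (F : Finset (Polynomial k)) : Finset (MvPolynomial (Fin n) k) :=
  F.image (fakeWeil q n) ∪
    Finset.image (fun i : Fin n => X i ^ q - X (i + 1)) Finset.univ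

/-- The weight of a natural number: its digit sum in base `q`. -/
def wNat (q e : ℕ) : ℕ := (Nat.digits q e).sum

/-- The weight of a univariate polynomial: the maximal weight of an exponent appearing in it. -/
def wPoly {k : Type*} [Field k] (q : ℕ) (f : Polynomial k) : ℕ :=
  f.support.sup fun e => wNat q e

/-! The monomial `overline{X^e}` has total degree the base-`q` digit sum of the reduced exponent
`e'`. The reduction `e ↦ e'` is reached by repeatedly folding `e ↦ (e mod q^n) + ⌊e / q^n⌋`,
which preserves `e` modulo `q^n - 1`; the digit sum is additive over base-`q^n` blocks and
subadditive, so folding never increases it, whence `deg f̄ ≤ w(f)`. The second inequality holds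
because an exponent `≤ deg f` has at most `⌊log_q deg f⌋ + 1` digits, each at most `q - 1`. -/

open Finset

section Weight

variable {q : ℕ}

lemma wNat_eq_mod_add_wNat_div (hq : 1 < q) (m : ℕ) :
    wNat q m = m % q + wNat q (m / q) := by
  rcases Nat.eq_zero_or_pos m with rfl | hm
  · simp [wNat]
  · rw [wNat, Nat.digits_def' hq hm, List.sum_cons]; rfl

lemma wNat_add_pow_mul (hq : 1 < q) {n a : ℕ} (ha : a < q ^ n) (b : ℕ) :
    wNat q (a + q ^ n * b) = wNat q a + wNat q b := by
  rcases Nat.eq_zero_or_pos b with rfl | hb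
  · simp [wNat]
  have hlen : (Nat.digits q a).length ≤ n := (Nat.digits_length_le_iff hq a).2 ha
  have happend := Nat.digits_append_zeroes_append_digits (k := n - (Nat.digits q a).length)
    (n := a) hq hb
  rw [Nat.add_sub_cancel' hlen] at happend
  simp [wNat, ← happend]

lemma sub_one_mul_sum_div_pow_add_wNat (hq : 1 < q) {a K : ℕ} (hK : Nat.log q a < K) :
    (q - 1) * ∑ i ∈ range K, a / q ^ (i + 1) + wNat q a = a := by
  have hvanish : ∀ i ∈ range K, i ∉ range (Nat.log q a + 1) → a / q ^ (i + 1) = 0 := by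
    intro i _ hi
    refine Nat.div_eq_of_lt ((Nat.lt_pow_succ_log_self hq a).trans_le ?_)
    exact Nat.pow_le_pow_right (by omega) (by simp only [mem_range] at hi; omega)
  rw [← sum_subset (range_subset_range.2 hK) hvanish,
    Nat.sub_one_mul_sum_log_div_pow_eq_sub_sum_digits, wNat]
  have := Nat.digit_sum_le q a
  omega

/-- `w(a) = a - (q - 1) ∑ᵢ ⌊a / q^{i+1}⌋`, and `⌊·⌋` is superadditive. -/
lemma wNat_add_le (hq : 1 < q) (a b : ℕ) : wNat q (a + b) ≤ wNat q a + wNat q b := by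
  set K := Nat.log q (a + b) + 1
  have hlog : ∀ c ≤ a + b, Nat.log q c < K := fun c hc =>
    Nat.lt_succ_of_le (Nat.log_mono_right hc)
  have ha := sub_one_mul_sum_div_pow_add_wNat hq (hlog a (by omega))
  have hb := sub_one_mul_sum_div_pow_add_wNat hq (hlog b (by omega))
  have hab := sub_one_mul_sum_div_pow_add_wNat hq (hlog (a + b) le_rfl)
  have hfloor : ∑ i ∈ range K, a / q ^ (i + 1) + ∑ i ∈ range K, b / q ^ (i + 1) ≤
      ∑ i ∈ range K, (a + b) / q ^ (i + 1) := by
    rw [← sum_add_distrib]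
    exact sum_le_sum fun i _ => Nat.div_add_div_le_add_div
  have := Nat.mul_le_mul_left (q - 1) hfloor
  rw [mul_add] at this
  omega

lemma wNat_le_sub_one_mul_log_add_one (hq : 1 < q) (m : ℕ) :
    wNat q m ≤ (q - 1) * (Nat.log q m + 1) := by
  rcases Nat.eq_zero_or_pos m with rfl | hm
  · simp [wNat]
  · have h := List.sum_le_card_nsmul (Nat.digits q m) (q - 1)
      (fun x hx => by have := Nat.digits_lt_base hq hx; omega)
    rwa [Nat.length_digits q m hq hm.ne', smul_eq_mul, mul_comm] at h

lemma sum_range_div_pow_mod_le_wNat (hq : 1 < q) (n m : ℕ) :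
    ∑ j ∈ range n, m / q ^ j % q ≤ wNat q m := by
  induction n generalizing m with
  | zero => simp
  | succ n ih =>
    have hshift : ∀ j ∈ range n, m / q ^ (j + 1) % q = m / q / q ^ j % q := by
      intro j _
      rw [Nat.div_div_eq_div_mul, ← pow_succ']
    rw [sum_range_succ', sum_congr rfl hshift, pow_zero, Nat.div_one,
      wNat_eq_mod_add_wNat_div hq m]
    have := ih (m / q)
    omega

end Weight

section Reduction

variable {q n : ℕ}

lemma mod_add_div_modEq_sub_one {N : ℕ} (hN : 0 < N) (e : ℕ) :
    e % N + e / N ≡ e [MOD N - 1] := by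
  have hN1 : N ≡ 1 [MOD N - 1] := Nat.modEq_sub hN
  calc e % N + e / N = e % N + 1 * (e / N) := by rw [one_mul]
    _ ≡ e % N + N * (e / N) [MOD N - 1] := (hN1.symm.mul_right _).add_left _
    _ = e := Nat.mod_add_div e N

lemma wNat_mod_add_div_le (hq : 1 < q) (e : ℕ) :
    wNat q (e % q ^ n + e / q ^ n) ≤ wNat q e :=
  calc wNat q (e % q ^ n + e / q ^ n) ≤ wNat q (e % q ^ n) + wNat q (e / q ^ n) :=
        wNat_add_le hq _ _
    _ = wNat q e := by
        rw [← wNat_add_pow_mul hq (Nat.mod_lt _ (by positivity)), Nat.mod_add_div]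

lemma exists_modEq_wNat_le (hq : 1 < q) (hn : n ≠ 0) {e : ℕ} (he : 0 < e) :
    ∃ m, 0 < m ∧ m < q ^ n ∧ m ≡ e [MOD q ^ n - 1] ∧ wNat q m ≤ wNat q e := by
  induction e using Nat.strong_induction_on with
  | _ e ih =>
    by_cases hlt : e < q ^ n
    · exact ⟨e, he, hlt, rfl, le_rfl⟩
    have hN : 1 < q ^ n := Nat.one_lt_pow hn hq
    have hdiv : 0 < e / q ^ n := Nat.div_pos (not_lt.1 hlt) (by omega)
    have hfold : e % q ^ n + e / q ^ n < e := by
      have := Nat.mod_add_div e (q ^ n)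
      have := lt_mul_of_one_lt_left hdiv hN
      omega
    obtain ⟨m, hm0, hmN, hmod, hw⟩ := ih _ hfold (lt_add_of_le_of_pos (Nat.zero_le _) hdiv)
    exact ⟨m, hm0, hmN, hmod.trans (mod_add_div_modEq_sub_one (by omega) e),
      hw.trans (wNat_mod_add_div_le hq e)⟩

lemma reduceExp_eq_of_modEq {e m : ℕ} (hm0 : 0 < m) (hmN : m < q ^ n) (he : q ^ n ≤ e)
    (hmod : m ≡ e [MOD q ^ n - 1]) : reduceExp q n e = m := by
  rw [reduceExp, if_neg (not_lt.2 he)]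
  split_ifs with hdvd
  · have hm : q ^ n - 1 ∣ m :=
      Nat.modEq_zero_iff_dvd.1 (hmod.trans (Nat.modEq_zero_iff_dvd.2 hdvd))
    have := Nat.le_of_dvd hm0 hm
    omega
  · have hmM : m < q ^ n - 1 := by
      refine lt_of_le_of_ne (by omega) fun hmM => hdvd ?_
      exact Nat.modEq_zero_iff_dvd.1
        (hmod.symm.trans (Nat.modEq_zero_iff_dvd.2 (hmM ▸ dvd_rfl)))
    exact ((Nat.mod_eq_of_lt hmM).symm.trans hmod).symm

lemma wNat_reduceExp_le (hq : 1 < q) (hn : n ≠ 0) (e : ℕ) :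
    wNat q (reduceExp q n e) ≤ wNat q e := by
  by_cases hlt : e < q ^ n
  · rw [reduceExp, if_pos hlt]
  obtain ⟨m, hm0, hmN, hmod, hw⟩ :=
    exists_modEq_wNat_le hq hn (e := e) (by have := Nat.one_le_pow n q (by omega); omega)
  rwa [reduceExp_eq_of_modEq hm0 hmN (not_lt.1 hlt) hmod]

lemma sum_expVec_le_wNat (hq : 1 < q) (hn : n ≠ 0) (e : ℕ) :
    ((expVec q n e).sum fun _ => id) ≤ wNat q e := by
  rw [Finsupp.sum_fintype _ _ (fun _ => rfl)]
  simp only [expVec, Finsupp.coe_equivFunOnFinite_symm, id]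
  rw [Fin.sum_univ_eq_sum_range (fun j => reduceExp q n e / q ^ j % q) n]
  exact (sum_range_div_pow_mod_le_wNat hq n _).trans (wNat_reduceExp_le hq hn e)

end Reduction

lemma totalDegree_fakeWeil_le_sup {k : Type*} [Field k] (q n : ℕ) (f : Polynomial k) :
    (fakeWeil q n f).totalDegree ≤ f.support.sup fun e => (expVec q n e).sum fun _ => id := by
  rw [fakeWeil, Polynomial.sum_def]
  exact (MvPolynomial.totalDegree_finsetSum _ _).trans
    (sup_mono_fun fun e _ => MvPolynomial.totalDegree_monomial_le _ _)

theorem totalDegree_fakeWeil_le_general {k : Type*} [Field k]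
    (q n : ℕ) (hq : IsPrimePow q) [NeZero n]
    (f : Polynomial k) :
    (fakeWeil q n f).totalDegree ≤ wPoly q f ∧
    wPoly q f ≤ (q - 1) * (Nat.log q f.natDegree + 1) := by
  have hq1 : 1 < q := hq.two_le
  refine ⟨(totalDegree_fakeWeil_le_sup q n f).trans
    (sup_mono_fun fun e _ => sum_expVec_le_wNat hq1 (NeZero.ne n) e),
    Finset.sup_le fun e he => ?_⟩
  calc wNat q e ≤ (q - 1) * (Nat.log q e + 1) := wNat_le_sub_one_mul_log_add_one hq1 e
    _ ≤ (q - 1) * (Nat.log q f.natDegree + 1) := by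
        gcongr
        exact Polynomial.le_natDegree_of_mem_supp e he

/-- `deg f̄ ≤ w(f) ≤ (q-1)(⌊log_q (deg f)⌋ + 1)`. -/
theorem totalDegree_fakeWeil_le {k : Type*} [Field k] [Fintype k]
    (q n : ℕ) (hq : IsPrimePow q) [NeZero n] (hcard : Fintype.card k = q ^ n)
    (f : Polynomial k) (hf : 1 ≤ f.natDegree) :
    (fakeWeil q n f).totalDegree ≤ wPoly q f ∧
    wPoly q f ≤ (q - 1) * (Nat.log q f.natDegree + 1) :=
  totalDegree_fakeWeil_le_general q n hq f
end

section
/- Let k be a finite field of cardinality q^n, let F ⊆ k[X] be finite, and set E = F̄_f ⊆ S. Then for all h_1, h_2 ∈ k[X]: (1) overline{h_1 + h_2} − (overline{h_1} + overline{h_2}) ∈ V_{E, max{deg(overline{h_1}), deg(overline{h_2})}}; and (2) overline{h_1 h_2} − overline{h_1}·overline{h_2} ∈ V_{E, deg(overline{h_1}) + deg(overline{h_2})}. -/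
open MvPolynomial

/-- `V_{E,d}`: the smallest `k`-subspace of the polynomial ring containing every `f ∈ E`
of total degree at most `d` and closed under multiplication by ring elements
as long as the degree stays at most `d`. -/
noncomputable def Vspace {k : Type*} [Field k] {σ : Type*} (E : Finset (MvPolynomial σ k)) (d : ℕ) :
    Submodule k (MvPolynomial σ k) :=
  sInf {W | (∀ f ∈ E, f.totalDegree ≤ d → f ∈ W) ∧
            ∀ g ∈ W, ∀ h : MvPolynomial σ k, (g * h).totalDegree ≤ d → g * h ∈ W}

/-! Let `φ : S → k[X]` be the specialisation `X_j ↦ X^{q^j}`, so `φ(X^s) = X^{Σ s_j q^j}`.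
Since the reduced exponent depends only on the exponent modulo `q^n - 1` and on whether it
vanishes, `overline{h₁ h₂} = overline{φ(overline{h₁} ⋅ overline{h₂})}`. It remains to see that
every monomial `X^s` is congruent to `overline{φ(X^s)}` modulo `V_{E, deg s}`: while some
`s_j ≥ q`, the generator `X_j^q - X_{j+1}` trades `X_j^q` for `X_{j+1}`, which lowers the degree
and, as `q^n ≡ 1`, keeps `Σ s_j q^j` modulo `q^n - 1` and nonzero; once all `s_j < q`, the
monomial is its own descent. -/

section Vspace

variable {k : Type*} [Field k] {σ : Type*} {E : Finset (MvPolynomial σ k)} {d d' : ℕ}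

theorem mem_Vspace_of_mem {f : MvPolynomial σ k} (hf : f ∈ E) (hd : f.totalDegree ≤ d) :
    f ∈ Vspace E d :=
  Submodule.mem_sInf.2 fun _ hW => hW.1 f hf hd

theorem mul_mem_Vspace {g h : MvPolynomial σ k} (hg : g ∈ Vspace E d)
    (hd : (g * h).totalDegree ≤ d) : g * h ∈ Vspace E d :=
  Submodule.mem_sInf.2 fun W hW => hW.2 g (Submodule.mem_sInf.1 hg W hW) h hd

theorem mul_mem_Vspace_of_mem {g h : MvPolynomial σ k} (hg : g ∈ E)
    (hd : g.totalDegree + h.totalDegree ≤ d) : g * h ∈ Vspace E d :=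
  mul_mem_Vspace (mem_Vspace_of_mem hg (le_self_add.trans hd)) ((totalDegree_mul g h).trans hd)

theorem Vspace_mono (h : d ≤ d') : Vspace E d ≤ Vspace E d' :=
  sInf_le ⟨fun _ hf hd => mem_Vspace_of_mem hf (hd.trans h),
    fun _ hg _ hd => mul_mem_Vspace hg (hd.trans h)⟩

end Vspace

section ReduceExp

variable {q n : ℕ}

theorem reduceExp_lt (hqn : 2 ≤ q ^ n) (e : ℕ) : reduceExp q n e < q ^ n := by
  unfold reduceExp
  split_ifs with h
  · exact h
  · omega
  · have : e % (q ^ n - 1) < q ^ n - 1 := Nat.mod_lt _ (by omega)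
    omega

theorem reduceExp_modEq (e : ℕ) : reduceExp q n e ≡ e [MOD q ^ n - 1] := by
  unfold reduceExp
  split_ifs with _ hdvd
  · rfl
  · exact (Nat.modEq_zero_iff_dvd.2 dvd_rfl).trans (Nat.modEq_zero_iff_dvd.2 hdvd).symm
  · exact Nat.mod_modEq e _

theorem reduceExp_eq_zero_iff (hqn : 2 ≤ q ^ n) (e : ℕ) : reduceExp q n e = 0 ↔ e = 0 := by
  unfold reduceExp
  split_ifs with _ hdvd
  · rfl
  · omega
  · exact ⟨fun h => absurd (Nat.dvd_of_mod_eq_zero h) hdvd, by omega⟩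

theorem reduceExp_eq_of_modEq_s18 (hqn : 2 ≤ q ^ n) {a b : ℕ} (h : a ≡ b [MOD q ^ n - 1])
    (h0 : a = 0 ↔ b = 0) : reduceExp q n a = reduceExp q n b := by
  by_cases ha : a = 0
  · rw [ha, h0.1 ha]
  have hra := (reduceExp_eq_zero_iff hqn a).not.2 ha
  have hrb := (reduceExp_eq_zero_iff hqn b).not.2 (h0.not.1 ha)
  have hlta := reduceExp_lt hqn a
  have hltb := reduceExp_lt hqn b
  -- both reduced exponents lie in `[1, q^n - 1]`; shifted down by one they are below the modulus
  have hshift : reduceExp q n a - 1 ≡ reduceExp q n b - 1 [MOD q ^ n - 1] :=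
    Nat.ModEq.add_right_cancel' 1 <| by
      rw [Nat.sub_add_cancel (by omega), Nat.sub_add_cancel (by omega)]
      exact ((reduceExp_modEq a).trans h).trans (reduceExp_modEq b).symm
  have := hshift.eq_of_lt_of_lt (by omega) (by omega)
  omega

end ReduceExp

def placeValue (q n : ℕ) (j : Fin n) : ℕ := q ^ (j : ℕ)

section ExpVec

open Finsupp

variable {q n : ℕ}

theorem expVec_apply (e : ℕ) (j : Fin n) :
    expVec q n e j = reduceExp q n e / q ^ (j : ℕ) % q := by
  simp [expVec]

theorem expVec_eq_of_modEq (hqn : 2 ≤ q ^ n) {a b : ℕ} (h : a ≡ b [MOD q ^ n - 1])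
    (h0 : a = 0 ↔ b = 0) : expVec q n a = expVec q n b := by
  unfold expVec
  rw [reduceExp_eq_of_modEq_s18 hqn h h0]

theorem expVec_reduceExp_add_reduceExp (hqn : 2 ≤ q ^ n) (a b : ℕ) :
    expVec q n (reduceExp q n a + reduceExp q n b) = expVec q n (a + b) :=
  expVec_eq_of_modEq hqn ((reduceExp_modEq a).add (reduceExp_modEq b)) <| by
    rw [Nat.add_eq_zero_iff, Nat.add_eq_zero_iff, reduceExp_eq_zero_iff hqn,
      reduceExp_eq_zero_iff hqn]

theorem weight_placeValue_eq_finFunctionFinEquiv {f : Fin n → Fin q} {s : Fin n →₀ ℕ}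
    (hs : ∀ j, s j = f j) : weight (placeValue q n) s = finFunctionFinEquiv f := by
  simp [weight_eq_sum, hs, placeValue]

theorem weight_expVec (hqn : 2 ≤ q ^ n) (e : ℕ) :
    weight (placeValue q n) (expVec q n e) = reduceExp q n e := by
  have hdigits := finFunctionFinEquiv.apply_symm_apply (⟨_, reduceExp_lt hqn e⟩ : Fin (q ^ n))
  rw [weight_placeValue_eq_finFunctionFinEquiv fun j => ?_, hdigits]
  rw [expVec_apply, finFunctionFinEquiv_symm_apply_val]

theorem expVec_weight {s : Fin n →₀ ℕ} (hs : ∀ j, s j < q) :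
    expVec q n (weight (placeValue q n) s) = s := by
  have hval := weight_placeValue_eq_finFunctionFinEquiv (f := fun j => ⟨s j, hs j⟩) fun _ => rfl
  have hred : reduceExp q n (weight (placeValue q n) s) = weight (placeValue q n) s :=
    if_pos (hval ▸ (finFunctionFinEquiv _).isLt)
  ext j
  rw [expVec_apply, hred, hval, ← finFunctionFinEquiv_symm_apply_val, Equiv.symm_apply_apply]

theorem placeValue_add_one_modEq [NeZero n] (hq : 0 < q) (j : Fin n) :
    placeValue q n (j + 1) ≡ q * placeValue q n j [MOD q ^ n - 1] := by
  rw [placeValue, placeValue, ← pow_succ']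
  obtain ⟨m, rfl⟩ : ∃ m, n = m + 1 := Nat.exists_eq_add_one.2 (Fin.pos j)
  rw [Fin.val_add_one j]
  split_ifs with hj
  · rw [hj, Fin.val_last, pow_zero]
    exact (Nat.modEq_sub (Nat.one_le_pow _ _ hq)).symm
  · rfl

theorem expVec_weight_carry [NeZero n] (hq : 2 ≤ q) (t : Fin n →₀ ℕ) (j : Fin n) :
    expVec q n (weight (placeValue q n) (t + single (j + 1) 1)) =
      expVec q n (weight (placeValue q n) (t + single j q)) := by
  have hpos : 0 < placeValue q n (j + 1) := by unfold placeValue; positivity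
  have hpos' : 0 < q * placeValue q n j := by unfold placeValue; positivity
  refine expVec_eq_of_modEq (hq.trans (Nat.le_self_pow (NeZero.ne n) q)) ?_ ?_ <;>
    simp only [map_add, weight_single, smul_eq_mul, one_mul]
  · exact (placeValue_add_one_modEq (by omega) j).add_left _
  · omega

end ExpVec

theorem totalDegree_X_pow_sub_X_le {R σ : Type*} [CommRing R] [Nontrivial R] {q : ℕ}
    (hq : 1 ≤ q) (i j : σ) : (X i ^ q - X j : MvPolynomial σ R).totalDegree ≤ q :=
  (totalDegree_sub _ _).trans <| by rw [totalDegree_X_pow, totalDegree_X]; omega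

section Carry

open Finsupp

variable {k : Type*} [Field k] [DecidableEq k] {q n : ℕ} [NeZero n] (F : Finset (Polynomial k))

theorem X_pow_sub_X_add_one_mem_fakeWeilSystem (j : Fin n) :
    (X j ^ q - X (j + 1) : MvPolynomial (Fin n) k) ∈ fakeWeilSystem q n F :=
  Finset.mem_union_right _ (Finset.mem_image_of_mem _ (Finset.mem_univ j))

theorem monomial_sub_monomial_carry_mem (hq : 1 ≤ q) {d : ℕ} (t : Fin n →₀ ℕ) (j : Fin n)
    (c : k) (hd : degree t + q ≤ d) :
    monomial (t + single j q) c - monomial (t + single (j + 1) 1) c ∈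
      Vspace (fakeWeilSystem q n F) d := by
  have hfactor : monomial (t + single j q) c - monomial (t + single (j + 1) 1) c =
      (X j ^ q - X (j + 1)) * monomial t c := by
    rw [sub_mul, X_pow_eq_monomial, ← pow_one (X (j + 1)), X_pow_eq_monomial, monomial_mul,
      monomial_mul, add_comm (single j q), add_comm (single (j + 1) 1), one_mul]
  rw [hfactor]
  refine mul_mem_Vspace_of_mem (X_pow_sub_X_add_one_mem_fakeWeilSystem F j) ?_
  have := totalDegree_monomial_le t c
  have := totalDegree_X_pow_sub_X_le (R := k) hq j (j + 1)
  have : (t.sum fun _ => id) = degree t := rfl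
  omega

theorem monomial_sub_monomial_expVec_mem (hq : 2 ≤ q) {d : ℕ} (s : Fin n →₀ ℕ) (c : k)
    (hd : degree s ≤ d) :
    monomial s c - monomial (expVec q n (weight (placeValue q n) s)) c ∈
      Vspace (fakeWeilSystem q n F) d := by
  by_cases hs : ∀ j, s j < q
  · rw [expVec_weight hs, sub_self]
    exact zero_mem _
  push Not at hs
  obtain ⟨j, hj⟩ := hs
  obtain ⟨t, hst⟩ : ∃ t, s = t + single j q :=
    ⟨s - single j q, (tsub_add_cancel_of_le (single_le_iff.2 hj)).symm⟩
  rw [hst] at hd ⊢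
  simp only [map_add, degree_single] at hd
  have hcarry := monomial_sub_monomial_carry_mem F (by omega) t j c hd
  have hrest := monomial_sub_monomial_expVec_mem (d := d) hq (t + single (j + 1) 1) c
    (by simp only [map_add, degree_single]; omega)
  rw [expVec_weight_carry hq] at hrest
  simpa only [sub_add_sub_cancel] using add_mem hcarry hrest
termination_by degree s
decreasing_by simp only [hst, map_add, degree_single]; omega

end Carry

section Descent

variable {k : Type*} [Field k] (q n : ℕ)

noncomputable def substPlaceValues : MvPolynomial (Fin n) k →ₐ[k] Polynomial k :=
  aeval fun j => Polynomial.X ^ placeValue q n j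

theorem substPlaceValues_monomial (s : Fin n →₀ ℕ) (c : k) :
    substPlaceValues q n (monomial s c) =
      Polynomial.monomial (Finsupp.weight (placeValue q n) s) c := by
  simp only [substPlaceValues, aeval_monomial, Finsupp.prod, ← pow_mul,
    Finset.prod_pow_eq_pow_sum, Finsupp.weight_apply, Finsupp.sum, smul_eq_mul, mul_comm,
    Polynomial.algebraMap_eq, Polynomial.C_mul_X_pow_eq_monomial]

theorem fakeWeil_add (f g : Polynomial k) :
    fakeWeil q n (f + g) = fakeWeil q n f + fakeWeil q n g :=
  Polynomial.sum_add_index f g _ (fun _ => map_zero _) fun _ _ _ => map_add _ _ _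

theorem fakeWeil_sum {ι : Type*} (s : Finset ι) (f : ι → Polynomial k) :
    fakeWeil q n (∑ i ∈ s, f i) = ∑ i ∈ s, fakeWeil q n (f i) :=
  map_sum (AddMonoidHom.mk' (fakeWeil q n) (fakeWeil_add q n)) f s

theorem fakeWeil_monomial (e : ℕ) (c : k) :
    fakeWeil q n (Polynomial.monomial e c) = monomial (expVec q n e) c :=
  Polynomial.sum_monomial_index c _ (map_zero _)

theorem fakeWeil_mul [NeZero n] (hq : 2 ≤ q) (f g : Polynomial k) :
    fakeWeil q n (f * g) =
      fakeWeil q n (substPlaceValues q n (fakeWeil q n f * fakeWeil q n g)) := by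
  have hqn : 2 ≤ q ^ n := hq.trans (Nat.le_self_pow (NeZero.ne n) q)
  induction f using Polynomial.induction_on' with
  | add f₁ f₂ hf₁ hf₂ =>
    rw [add_mul, fakeWeil_add, fakeWeil_add, add_mul, map_add, fakeWeil_add, hf₁, hf₂]
  | monomial a c =>
    induction g using Polynomial.induction_on' with
    | add g₁ g₂ hg₁ hg₂ =>
      rw [mul_add, fakeWeil_add, fakeWeil_add, mul_add, map_add, fakeWeil_add, hg₁, hg₂]
    | monomial b c' =>
      rw [Polynomial.monomial_mul_monomial, fakeWeil_monomial, fakeWeil_monomial,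
        fakeWeil_monomial, monomial_mul, substPlaceValues_monomial, fakeWeil_monomial, map_add,
        weight_expVec hqn, weight_expVec hqn, expVec_reduceExp_add_reduceExp hqn]

theorem sub_fakeWeil_substPlaceValues_mem [DecidableEq k] [NeZero n] (hq : 2 ≤ q)
    (F : Finset (Polynomial k)) (p : MvPolynomial (Fin n) k) :
    p - fakeWeil q n (substPlaceValues q n p) ∈ Vspace (fakeWeilSystem q n F) p.totalDegree := by
  have hterms : ∀ s ∈ p.support, monomial s (coeff s p) -
      fakeWeil q n (substPlaceValues q n (monomial s (coeff s p))) ∈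
        Vspace (fakeWeilSystem q n F) p.totalDegree := fun s hs => by
    rw [substPlaceValues_monomial, fakeWeil_monomial]
    exact monomial_sub_monomial_expVec_mem F hq s (coeff s p) (le_totalDegree hs)
  have hsum := Submodule.sum_mem _ hterms
  rwa [Finset.sum_sub_distrib, ← fakeWeil_sum, ← map_sum, ← p.as_sum] at hsum

end Descent

theorem fakeWeil_add_mul_equiv_general {k : Type*} [Field k] [DecidableEq k]
    (q n : ℕ) (hq : IsPrimePow q) [NeZero n]
    (F : Finset (Polynomial k)) (h1 h2 : Polynomial k) :
    (fakeWeil q n (h1 + h2) - (fakeWeil q n h1 + fakeWeil q n h2) ∈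
      Vspace (fakeWeilSystem q n F)
        (max (fakeWeil q n h1).totalDegree (fakeWeil q n h2).totalDegree)) ∧
    (fakeWeil q n (h1 * h2) - fakeWeil q n h1 * fakeWeil q n h2 ∈
      Vspace (fakeWeilSystem q n F)
        ((fakeWeil q n h1).totalDegree + (fakeWeil q n h2).totalDegree)) := by
  constructor
  · rw [fakeWeil_add, sub_self]
    exact zero_mem _
  · rw [fakeWeil_mul q n hq.two_le, ← neg_sub]
    exact neg_mem <| Vspace_mono (totalDegree_mul _ _)
      (sub_fakeWeil_substPlaceValues_mem q n hq.two_le F _)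

/-- Additivity and multiplicativity of the fake Weil descent modulo the spaces `V_{E,d}`:
`overline{h_1 + h_2} ≡ overline{h_1} + overline{h_2}` in degree
`max(deg overline{h_1}, deg overline{h_2})`, and
`overline{h_1 h_2} ≡ overline{h_1} ⋅ overline{h_2}` in degree
`deg overline{h_1} + deg overline{h_2}`. -/
theorem fakeWeil_add_mul_equiv {k : Type*} [Field k] [Fintype k] [DecidableEq k]
    (q n : ℕ) (hq : IsPrimePow q) [NeZero n] (hcard : Fintype.card k = q ^ n)
    (F : Finset (Polynomial k)) (h1 h2 : Polynomial k) :
    (fakeWeil q n (h1 + h2) - (fakeWeil q n h1 + fakeWeil q n h2) ∈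
      Vspace (fakeWeilSystem q n F)
        (max (fakeWeil q n h1).totalDegree (fakeWeil q n h2).totalDegree)) ∧
    (fakeWeil q n (h1 * h2) - fakeWeil q n h1 * fakeWeil q n h2 ∈
      Vspace (fakeWeilSystem q n F)
        ((fakeWeil q n h1).totalDegree + (fakeWeil q n h2).totalDegree)) :=
  fakeWeil_add_mul_equiv_general q n hq F h1 h2
end
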